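/- Let γ > 0, κ > 0 and α > 0 be real numbers, and for each integer N ≥ 1 define b_S(N) = 1/( 2(γ/N + α) + (γ/N)(N−1) ) and b_W(N) = 1/( 2(κ/N + α) + (2κ/N)(N−1) ). Then b_S(N)/b_W(N) converges, as N → ∞, to 2(κ+α)/(γ+2α); moreover 2(κ+α)/(γ+2α) > 1 if and only if γ < 2κ. -/

import Mathlib

open Filter Topology

/-! Both denominators simplify exactly: the selfish one is `γ + 2α + γ/N` and the
welfare-maximizing one is the constant `2(κ + α)`. So the ratio is
`2(κ + α)/(γ + 2α + γ/N)`, whose limit is `2(κ + α)/(γ + 2α)`; with `γ + 2α > 0`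
this exceeds 1 exactly when `γ + 2α < 2κ + 2α`. -/

lemma selfish_denom_eq {N : ℝ} (hN : N ≠ 0) (γ α : ℝ) :
    2 * (γ / N + α) + γ / N * (N - 1) = γ + 2 * α + γ / N := by
  field_simp
  ring

lemma welfare_denom_eq {N : ℝ} (hN : N ≠ 0) (κ α : ℝ) :
    2 * (κ / N + α) + 2 * κ / N * (N - 1) = 2 * (κ + α) := by
  field_simp
  ring

lemma tendsto_add_div_natCast_atTop (c a : ℝ) :
    Tendsto (fun N : ℕ => c + a / N) atTop (𝓝 c) := by
  simpa using tendsto_const_nhds.add (tendsto_const_div_atTop_nhds_zero_nat a)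

theorem stmt_8_general (γ κ α : ℝ) (hγ : 0 < γ) (hα : 0 < α)
    (bS bW : ℕ → ℝ)
    (hbS : ∀ N : ℕ, 1 ≤ N →
      bS N = 1 / (2 * (γ / N + α) + (γ / N) * ((N : ℝ) - 1)))
    (hbW : ∀ N : ℕ, 1 ≤ N →
      bW N = 1 / (2 * (κ / N + α) + (2 * κ / N) * ((N : ℝ) - 1))) :
    Tendsto (fun N => bS N / bW N) atTop (nhds (2 * (κ + α) / (γ + 2 * α)))
    ∧ (1 < 2 * (κ + α) / (γ + 2 * α) ↔ γ < 2 * κ) := by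
  have hpos : 0 < γ + 2 * α := by positivity
  have hratio : ∀ᶠ N : ℕ in atTop,
      2 * (κ + α) / (γ + 2 * α + γ / N) = bS N / bW N := by
    filter_upwards [eventually_ge_atTop 1] with N hN
    have hN0 : (N : ℝ) ≠ 0 := by positivity
    rw [hbS N hN, hbW N hN, selfish_denom_eq hN0, welfare_denom_eq hN0,
      div_div_div_cancel_left' _ _ one_ne_zero]
  refine ⟨?_, ?_⟩
  · exact (tendsto_const_nhds.div (tendsto_add_div_natCast_atTop _ γ) hpos.ne').congr' hratio
  · rw [one_lt_div hpos]
    constructor <;> intro h <;> linarith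

/-- Corollary 1, item 3: the ratio of selfish to welfare-maximizing
expected consumption constants tends to `2(κ+α)/(γ+2α)`, which exceeds 1 iff `γ < 2κ`. -/
theorem stmt_8 (γ κ α : ℝ) (hγ : 0 < γ) (hκ : 0 < κ) (hα : 0 < α)
    (bS bW : ℕ → ℝ)
    (hbS : ∀ N : ℕ, 1 ≤ N →
      bS N = 1 / (2 * (γ / N + α) + (γ / N) * ((N : ℝ) - 1)))
    (hbW : ∀ N : ℕ, 1 ≤ N →
      bW N = 1 / (2 * (κ / N + α) + (2 * κ / N) * ((N : ℝ) - 1))) :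
    Tendsto (fun N => bS N / bW N) atTop (nhds (2 * (κ + α) / (γ + 2 * α)))
    ∧ (1 < 2 * (κ + α) / (γ + 2 * α) ↔ γ < 2 * κ) :=
  stmt_8_general γ κ α hγ hα bS bW hbS hbW
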